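/- arXiv:1108.1527 — 3 statements merged into one kernel-verified Lean document; each statement's English description precedes it below -/
import Mathlib

section
/- Let W be a real separable Banach space and μ a Borel probability measure on W whose characteristic functional satisfies ∫_W exp(i·u(x)) dμ(x) = exp(−q(u,u)/2) for every u ∈ W*, where q : W* × W* → ℝ is a symmetric positive semidefinite bilinear form. Then for every u, v ∈ W*, the function w ↦ u(w)·v(w) is μ-integrable and ∫_W u(w) v(w) dμ(w) = q(u,v). -/
/-!
Applying the hypothesis to `t • u` shows that every `u ∈ W*` has characteristic function
`t ↦ exp (-t² q(u,u) / 2)` under `μ`, so by Lévy's uniqueness theorem `u` has law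
`N(0, q(u,u))`. Hence `u ∈ L²(μ)`, `∫ u dμ = 0` and `Var u = q(u,u)`; polarizing
`Var (u + v) = Var u + 2 cov(u, v) + Var v` against the bilinearity of `q` gives
`∫ u v dμ = cov(u, v) = q(u,v)`.
-/

open MeasureTheory ProbabilityTheory Complex

open scoped NNReal

lemma hasLaw_gaussianReal_of_charFunDual {E : Type*} [NormedAddCommGroup E] [NormedSpace ℝ E]
    [MeasurableSpace E] [BorelSpace E] {μ : Measure E} [IsFiniteMeasure μ]
    (L : StrongDual ℝ E) (v : ℝ≥0)
    (h : ∀ t : ℝ, charFunDual μ (t • L) = exp (-(t ^ 2 * v) / 2)) :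
    HasLaw L (gaussianReal 0 v) μ where
  map_eq := by
    refine Measure.ext_of_charFun (funext fun t => ?_)
    rw [charFun_map_eq_charFunDual_smul, h, charFun_gaussianReal]
    congr 1
    push_cast
    ring

theorem gaussian_covariance_general
    {W : Type*} [NormedAddCommGroup W] [NormedSpace ℝ W]
    [MeasurableSpace W] [BorelSpace W]
    (μ : Measure W) [IsProbabilityMeasure μ]
    (q : (W →L[ℝ] ℝ) → (W →L[ℝ] ℝ) → ℝ)
    (hq_symm : ∀ u v, q u v = q v u)
    (hq_add : ∀ u₁ u₂ v, q (u₁ + u₂) v = q u₁ v + q u₂ v)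
    (hq_smul : ∀ (c : ℝ) (u v), q (c • u) v = c * q u v)
    (hq_pos : ∀ u, 0 ≤ q u u)
    (hchar : ∀ u : W →L[ℝ] ℝ,
      ∫ x, Complex.exp (Complex.I * (u x : ℂ)) ∂μ = Complex.exp (-(q u u : ℂ) / 2)) :
    ∀ u v : W →L[ℝ] ℝ,
      Integrable (fun w => u w * v w) μ ∧ (∫ w, u w * v w ∂μ) = q u v := by
  have hq_smul_smul (t : ℝ) (u) : q (t • u) (t • u) = t ^ 2 * q u u := by
    rw [hq_smul, hq_symm, hq_smul, hq_symm]
    ring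
  have hq_add_add (u v) : q (u + v) (u + v) = q u u + 2 * q u v + q v v := by
    rw [hq_add, hq_symm u, hq_symm v, hq_add, hq_add, hq_symm v u]
    ring
  have hlaw (u : W →L[ℝ] ℝ) : HasLaw u (gaussianReal 0 (q u u).toNNReal) μ := by
    refine hasLaw_gaussianReal_of_charFunDual u _ fun t => ?_
    rw [charFunDual_apply, Real.coe_toNNReal _ (hq_pos u)]
    simpa [hq_smul_smul, mul_comm I] using hchar (t • u)
  have hL2 (u : W →L[ℝ] ℝ) : MemLp u 2 μ := (hlaw u).hasGaussianLaw.memLp_two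
  have hmean (u : W →L[ℝ] ℝ) : μ[u] = 0 := by
    rw [(hlaw u).integral_eq, integral_id_gaussianReal]
  have hvar (u : W →L[ℝ] ℝ) : Var[u; μ] = q u u := by
    rw [(hlaw u).variance_eq, variance_id_gaussianReal, Real.coe_toNNReal _ (hq_pos u)]
  intro u v
  refine ⟨(hL2 u).integrable_mul (hL2 v), ?_⟩
  have hpolar := variance_add (hL2 u) (hL2 v)
  rw [← FunLike.coe_add, hvar, hvar, hvar, hq_add_add, covariance_eq_sub (hL2 u) (hL2 v),
    hmean u, zero_mul, sub_zero] at hpolar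
  simp only [Pi.mul_apply] at hpolar
  linarith

/-- If `μ` is a Gaussian measure on a real separable Banach space `W`, i.e. its
characteristic functional is given by `∫ exp(i u(x)) dμ = exp(-q(u,u)/2)` for a
symmetric positive semidefinite bilinear form `q` on the dual, then for all
continuous linear functionals `u v`, the product `u·v` is `μ`-integrable and
`∫ u(w) v(w) dμ(w) = q(u,v)`. -/
theorem gaussian_covariance
    {W : Type*} [NormedAddCommGroup W] [NormedSpace ℝ W] [CompleteSpace W]
    [TopologicalSpace.SeparableSpace W]
    [MeasurableSpace W] [BorelSpace W]
    (μ : Measure W) [IsProbabilityMeasure μ]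
    (q : (W →L[ℝ] ℝ) → (W →L[ℝ] ℝ) → ℝ)
    (hq_symm : ∀ u v, q u v = q v u)
    (hq_add : ∀ u₁ u₂ v, q (u₁ + u₂) v = q u₁ v + q u₂ v)
    (hq_smul : ∀ (c : ℝ) (u v), q (c • u) v = c * q u v)
    (hq_pos : ∀ u, 0 ≤ q u u)
    (hchar : ∀ u : W →L[ℝ] ℝ,
      ∫ x, Complex.exp (Complex.I * (u x : ℂ)) ∂μ = Complex.exp (-(q u u : ℂ) / 2)) :
    ∀ u v : W →L[ℝ] ℝ,
      Integrable (fun w => u w * v w) μ ∧ (∫ w, u w * v w ∂μ) = q u v :=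
  gaussian_covariance_general μ q hq_symm hq_add hq_smul hq_pos hchar
end

section
/- Let ρ : W × W → K be a continuous bilinear map with norm ‖ρ‖₀ := sup{‖ρ(w,w')‖_K : ‖w‖_W = ‖w'‖_W = 1}, and let C₂ := ∫_W ‖w‖²_W dμ(w). Then Σ_{i=1}^∞ Σ_{j=1}^∞ ‖ρ(e_i,e_j)‖²_K ≤ C₂² · ‖ρ‖₀²; in particular the double series is finite, i.e. ρ is Hilbert–Schmidt along (e_j). -/
/-!
Expanding `‖T w‖²` in an orthonormal basis of the finite-dimensional space `K` and applying the
covariance identity to each coordinate functional gives `∑ⱼ ‖T eⱼ‖² = ∫ ‖T w‖² dμ` for every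
continuous linear `T : W → K`. Using this once for `T = ρ(eᵢ, ·)` and once for `T = ρ(·, w)`
turns the double series into `∫∫ ‖ρ(w', w)‖² dμ(w') dμ(w)`, which is at most `‖ρ‖² C₂²`.
-/

open MeasureTheory

section Integrals

variable {α : Type*} [MeasurableSpace α] {μ : Measure α}

theorem summable_integral_and_tsum_le_of_sum_le {ι : Type*} {f : ι → α → ℝ} {g : α → ℝ}
    (hf_nonneg : ∀ i w, 0 ≤ f i w) (hf_int : ∀ i, Integrable (f i) μ) (hg : Integrable g μ)
    (hfg : ∀ (s : Finset ι) w, ∑ i ∈ s, f i w ≤ g w) :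
    Summable (fun i => ∫ w, f i w ∂μ) ∧ ∑' i, ∫ w, f i w ∂μ ≤ ∫ w, g w ∂μ := by
  have hle : ∀ s : Finset ι, ∑ i ∈ s, ∫ w, f i w ∂μ ≤ ∫ w, g w ∂μ := fun s => by
    rw [← integral_finsetSum s fun i _ => hf_int i]
    exact integral_mono (integrable_finsetSum s fun i _ => hf_int i) hg (hfg s)
  have hnonneg : 0 ≤ fun i => ∫ w, f i w ∂μ := fun i => integral_nonneg (hf_nonneg i)
  exact ⟨summable_of_sum_le hnonneg hle, Real.tsum_le_of_sum_le hnonneg hle⟩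

end Integrals

section SquareIntegrable

variable {W : Type*} [NormedAddCommGroup W] [NormedSpace ℝ W] [MeasurableSpace W]
  [BorelSpace W] {μ : Measure W} {E : Type*} [NormedAddCommGroup E] [NormedSpace ℝ E]

theorem integrable_norm_sq_apply (hμ2 : Integrable (fun w => ‖w‖ ^ 2) μ) (T : W →L[ℝ] E) :
    Integrable (fun w => ‖T w‖ ^ 2) μ := by
  refine (hμ2.const_mul (‖T‖ ^ 2)).mono' (by fun_prop : Continuous fun w => ‖T w‖ ^ 2).aestronglyMeasurable (ae_of_all _ fun w => ?_)
  rw [norm_pow, norm_norm, ← mul_pow]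
  exact pow_le_pow_left₀ (norm_nonneg _) (T.le_opNorm w) 2

theorem integral_norm_sq_apply_le (hμ2 : Integrable (fun w => ‖w‖ ^ 2) μ) (T : W →L[ℝ] E) :
    ∫ w, ‖T w‖ ^ 2 ∂μ ≤ ‖T‖ ^ 2 * ∫ w, ‖w‖ ^ 2 ∂μ := by
  rw [← integral_const_mul]
  refine integral_mono (integrable_norm_sq_apply hμ2 T) (hμ2.const_mul _) fun w => ?_
  rw [← mul_pow]
  exact pow_le_pow_left₀ (norm_nonneg _) (T.le_opNorm w) 2

theorem hasSum_norm_sq_apply_of_covariance {K : Type*} [NormedAddCommGroup K]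
    [InnerProductSpace ℝ K] [FiniteDimensional ℝ K]
    (hμ2 : Integrable (fun w => ‖w‖ ^ 2) μ) {e : ℕ → W}
    (he : ∀ u : W →L[ℝ] ℝ,
      Summable (fun j => (u (e j)) ^ 2) ∧ (∫ w, (u w) ^ 2 ∂μ) = ∑' j, (u (e j)) ^ 2)
    (T : W →L[ℝ] K) :
    HasSum (fun j => ‖T (e j)‖ ^ 2) (∫ w, ‖T w‖ ^ 2 ∂μ) := by
  let b := stdOrthonormalBasis ℝ K
  let u : Fin (Module.finrank ℝ K) → W →L[ℝ] ℝ := fun k => (innerSL ℝ (b k)).comp T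
  have hnorm (w : W) : ‖T w‖ ^ 2 = ∑ k, (u k w) ^ 2 := (b.sum_sq_inner_right (T w)).symm
  have hcoord (k) : HasSum (fun j => (u k (e j)) ^ 2) (∫ w, (u k w) ^ 2 ∂μ) :=
    (he (u k)).1.hasSum_iff.2 (he (u k)).2.symm
  have hint (k) : Integrable (fun w => (u k w) ^ 2) μ := by
    simpa only [Real.norm_eq_abs, sq_abs] using integrable_norm_sq_apply hμ2 (u k)
  simp only [hnorm]
  rw [integral_finsetSum _ fun k _ => hint k]
  exact hasSum_sum fun k _ => hcoord k

end SquareIntegrable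

theorem continuousBilinearMap_hilbertSchmidt_general
    {W : Type*} [NormedAddCommGroup W] [NormedSpace ℝ W]
    [MeasurableSpace W] [BorelSpace W]
    {K : Type*} [NormedAddCommGroup K] [InnerProductSpace ℝ K] [FiniteDimensional ℝ K]
    (μ : Measure W)
    (hμ2 : Integrable (fun w => ‖w‖ ^ 2) μ)
    (e : ℕ → W)
    (he : ∀ u : W →L[ℝ] ℝ,
      Summable (fun j => (u (e j)) ^ 2) ∧ (∫ w, (u w) ^ 2 ∂μ) = ∑' j, (u (e j)) ^ 2)
    (ρ : W →L[ℝ] W →L[ℝ] K) :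
    Summable (fun p : ℕ × ℕ => ‖ρ (e p.1) (e p.2)‖ ^ 2) ∧
      (∑' i : ℕ, ∑' j : ℕ, ‖ρ (e i) (e j)‖ ^ 2) ≤ (∫ w, ‖w‖ ^ 2 ∂μ) ^ 2 * ‖ρ‖ ^ 2 := by
  set C₂ := ∫ w, ‖w‖ ^ 2 ∂μ
  have hrow (i : ℕ) := hasSum_norm_sq_apply_of_covariance hμ2 he (ρ (e i))
  have hcolumn (s : Finset ℕ) (w : W) : ∑ i ∈ s, ‖ρ (e i) w‖ ^ 2 ≤ ‖ρ‖ ^ 2 * C₂ * ‖w‖ ^ 2 := by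
    have hsum := hasSum_norm_sq_apply_of_covariance hμ2 he (ρ.flip w)
    simp only [ContinuousLinearMap.flip_apply] at hsum
    calc ∑ i ∈ s, ‖ρ (e i) w‖ ^ 2 ≤ ∫ w', ‖ρ w' w‖ ^ 2 ∂μ :=
          sum_le_hasSum s (fun i _ => sq_nonneg _) hsum
      _ ≤ ‖ρ.flip w‖ ^ 2 * C₂ := integral_norm_sq_apply_le hμ2 (ρ.flip w)
      _ ≤ (‖ρ‖ * ‖w‖) ^ 2 * C₂ := by
          gcongr
          simpa only [ρ.opNorm_flip] using ρ.flip.le_opNorm w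
      _ = ‖ρ‖ ^ 2 * C₂ * ‖w‖ ^ 2 := by ring
  obtain ⟨houter, hle⟩ := summable_integral_and_tsum_le_of_sum_le (fun i w => sq_nonneg _)
    (fun i => integrable_norm_sq_apply hμ2 (ρ (e i))) (hμ2.const_mul _) hcolumn
  simp only [← fun i => (hrow i).tsum_eq, integral_const_mul] at houter hle
  refine ⟨(summable_prod_of_nonneg fun _ => sq_nonneg _).2 ⟨fun i => (hrow i).summable, houter⟩, ?_⟩
  linarith

/-- In the setting of an abstract Wiener space `(W, H, μ)` with orthonormal basis
`(e_j)` of the Cameron–Martin space, every continuous bilinear map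
`ρ : W × W → K` into a finite-dimensional inner product space is Hilbert–Schmidt
along `(e_j)`: `Σ_{i,j} ‖ρ(e_i,e_j)‖² ≤ C₂² ‖ρ‖₀²` where `C₂ = ∫ ‖w‖² dμ` and
`‖ρ‖₀` is the operator norm of `ρ`. -/
theorem continuousBilinearMap_hilbertSchmidt
    {W : Type*} [NormedAddCommGroup W] [NormedSpace ℝ W]
    [TopologicalSpace.SeparableSpace W] [MeasurableSpace W] [BorelSpace W]
    {K : Type*} [NormedAddCommGroup K] [InnerProductSpace ℝ K] [FiniteDimensional ℝ K]
    (μ : Measure W) [IsProbabilityMeasure μ]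
    (hμ2 : Integrable (fun w => ‖w‖ ^ 2) μ)
    (e : ℕ → W)
    (he : ∀ u : W →L[ℝ] ℝ,
      Summable (fun j => (u (e j)) ^ 2) ∧ (∫ w, (u w) ^ 2 ∂μ) = ∑' j, (u (e j)) ^ 2)
    (ρ : W →L[ℝ] W →L[ℝ] K) :
    Summable (fun p : ℕ × ℕ => ‖ρ (e p.1) (e p.2)‖ ^ 2) ∧
      (∑' i : ℕ, ∑' j : ℕ, ‖ρ (e i) (e j)‖ ^ 2) ≤ (∫ w, ‖w‖ ^ 2 ∂μ) ^ 2 * ‖ρ‖ ^ 2 :=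
  continuousBilinearMap_hilbertSchmidt_general μ hμ2 e he ρ
end

section
/- Let f : W × 𝐂 → ℝ be twice continuously Fréchet differentiable. For h = (A,a) and k = (B,b) in W × 𝐂, ( h̃(k̃ f) − k̃(h̃ f) )(w,c) = f'(w,c)(0, ω(A,B)) for all (w,c) ∈ W × 𝐂. In other words, the commutator of the left-invariant derivative operators h̃ and k̃ is the left-invariant derivative along the Lie bracket [h,k] = (0, ω(A,B)). -/
/-!
Writing `h̃ f (x) = f'(x)(V_h x)` with the affine vector field `V_h x = (A, a + ½ ω(x.1, A))`,
the product rule gives `k̃(h̃ f)(x) = f''(x)(V_k x, V_h x) + f'(x)(0, ½ ω(B, A))`.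
The second derivative is symmetric for `C²` functions, so it cancels in the commutator, and
skew-symmetry turns `½ ω(A, B) - ½ ω(B, A)` into `ω(A, B)`.
-/

/-- The left-invariant derivative on the Heisenberg-like group `G = W × 𝐂` along
`h = (A, a)`: `(h̃ f)(w,c) = f'(w,c)(A, a + ½ ω(w,A))`. -/
noncomputable def liftDeriv {W C : Type*} [NormedAddCommGroup W] [NormedSpace ℝ W]
    [NormedAddCommGroup C] [NormedSpace ℝ C]
    (ω : W →L[ℝ] W →L[ℝ] C) (h : W × C) (f : W × C → ℝ) : W × C → ℝ :=
  fun x => fderiv ℝ f x (h.1, h.2 + (1 / 2 : ℝ) • ω x.1 h.1)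

section LeftInvariantField

variable {W C : Type*} [NormedAddCommGroup W] [NormedSpace ℝ W]
  [NormedAddCommGroup C] [NormedSpace ℝ C] (ω : W →L[ℝ] W →L[ℝ] C)

noncomputable def leftInvariantField (h : W × C) (x : W × C) : W × C :=
  (h.1, h.2 + (1 / 2 : ℝ) • ω x.1 h.1)

lemma liftDeriv_apply (h : W × C) (f : W × C → ℝ) (x : W × C) :
    liftDeriv ω h f x = fderiv ℝ f x (leftInvariantField ω h x) := rfl

lemma hasFDerivAt_leftInvariantField (h : W × C) (x : W × C) :
    HasFDerivAt (leftInvariantField ω h)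
      ((0 : W × C →L[ℝ] W).prod ((1 / 2 : ℝ) • (ω.flip h.1).comp (.fst ℝ W C))) x := by
  refine (hasFDerivAt_const h.1 x).prodMk ?_
  simpa using ((ω.flip h.1).comp (.fst ℝ W C)).hasFDerivAt.const_smul (1 / 2 : ℝ)
    |>.const_add h.2

lemma liftDeriv_liftDeriv {f : W × C → ℝ} {x : W × C}
    (hf : DifferentiableAt ℝ (fderiv ℝ f) x) (h k : W × C) :
    liftDeriv ω k (liftDeriv ω h f) x
      = fderiv ℝ (fderiv ℝ f) x (leftInvariantField ω k x) (leftInvariantField ω h x)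
        + fderiv ℝ f x (0, (1 / 2 : ℝ) • ω k.1 h.1) := by
  have hderiv := hf.hasFDerivAt.clm_apply (hasFDerivAt_leftInvariantField ω h x)
  rw [liftDeriv_apply, show liftDeriv ω h f = _ from funext (liftDeriv_apply ω h f),
    hderiv.fderiv]
  simp [leftInvariantField, add_comm]

end LeftInvariantField

theorem liftDeriv_commutator_general {W C : Type*} [NormedAddCommGroup W] [NormedSpace ℝ W]
    [NormedAddCommGroup C] [InnerProductSpace ℝ C]
    (ω : W →L[ℝ] W →L[ℝ] C)
    (hskew : ∀ w w' : W, ω w w' = -ω w' w)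
    (f : W × C → ℝ) (hf : ContDiff ℝ 2 f)
    (A B : W) (a b : C) (x : W × C) :
    liftDeriv ω (A, a) (liftDeriv ω (B, b) f) x
        - liftDeriv ω (B, b) (liftDeriv ω (A, a) f) x
      = fderiv ℝ f x (0, ω A B) := by
  have hf' : DifferentiableAt ℝ (fderiv ℝ f) x :=
    (hf.fderiv_right le_rfl).differentiable one_ne_zero x
  have hsymm : IsSymmSndFDerivAt ℝ f x := hf.contDiffAt.isSymmSndFDerivAt (by simp)
  rw [liftDeriv_liftDeriv ω hf', liftDeriv_liftDeriv ω hf', hsymm, add_sub_add_left_eq_sub,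
    ← map_sub, hskew B A, Prod.mk_sub_mk, sub_zero, smul_neg, sub_neg_eq_add, ← add_smul]
  norm_num

/-- For a twice continuously Fréchet differentiable `f : W × 𝐂 → ℝ` and
`h = (A,a)`, `k = (B,b)`, the commutator of the left-invariant derivatives
satisfies `(h̃(k̃ f) − k̃(h̃ f))(x) = f'(x)(0, ω(A,B))`, i.e. it is the
left-invariant derivative along the Lie bracket `[h,k] = (0, ω(A,B))`. -/
theorem liftDeriv_commutator {W C : Type*} [NormedAddCommGroup W] [NormedSpace ℝ W]
    [NormedAddCommGroup C] [InnerProductSpace ℝ C] [FiniteDimensional ℝ C]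
    (ω : W →L[ℝ] W →L[ℝ] C)
    (hskew : ∀ w w' : W, ω w w' = -ω w' w)
    (f : W × C → ℝ) (hf : ContDiff ℝ 2 f)
    (A B : W) (a b : C) (x : W × C) :
    liftDeriv ω (A, a) (liftDeriv ω (B, b) f) x
        - liftDeriv ω (B, b) (liftDeriv ω (A, a) f) x
      = fderiv ℝ f x (0, ω A B) :=
  liftDeriv_commutator_general ω hskew f hf A B a b x
end
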